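/- (Lower bound of Proposition 2.) Let λ > 0 be real, and set r_lo = ⌊1/(√2·λ)⌋ and r_up = ⌈1/(√2·λ)⌉. Assume 1/(√2·λ) is not an integer (so r_lo < r_up) and assume 2·r_up·λ ≥ √3. Then ∑_{j=1}^{∞} v(j,λ) ≥ [if r_lo ≥ 1 then (w(r_lo − 1,λ) + v(r_lo,λ)) else 0] + v(r_up,λ) + (r_up + 1)·exp(−2(r_up+1)²λ²), where v(r,λ) = (4r²λ² − 1)·exp(−2r²λ²) and w(r,λ) = −r·exp(−2r²λ²). Consequently the Kuiper p-value KD = 2∑_{j=1}^∞ v(j,λ) is at least twice the right-hand side. -/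

import Mathlib

/-- `v(r,λ) = (4r²λ² - 1)·exp(-2r²λ²)`. -/
noncomputable def v (r l : ℝ) : ℝ := (4 * r ^ 2 * l ^ 2 - 1) * Real.exp (-2 * r ^ 2 * l ^ 2)

/-- `w(r,λ) = -r·exp(-2r²λ²)`, an antiderivative of `v(·,λ)`. -/
noncomputable def w (r l : ℝ) : ℝ := -r * Real.exp (-2 * r ^ 2 * l ^ 2)

/-!
Since `w(·,λ)` is an antiderivative of `v(·,λ)`, unit steps of `w` are integrals of `v` over unit
intervals. The derivative `4rλ²(3 - 4r²λ²)·exp(-2r²λ²)` shows that `v(·,λ)` increases while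
`2r²λ² ≤ 3/2` and decreases afterwards. On the increasing branch `v(j) ≥ ∫_{j-1}^{j} v`, and these
terms for `j < r_lo` add up to `w(r_lo - 1)`; on the decreasing branch `v(j) ≥ ∫_j^{j+1} v`, and
the terms for `j > r_up` add up to `-w(r_up + 1)` because `w` vanishes at infinity. Since
`1/(√2λ)` is not an integer, `r_up = r_lo + 1`, so the two remaining terms are `v(r_lo)` and
`v(r_up)`.
-/

open Real Set Filter Finset Topology

section
variable {l : ℝ}

theorem hasDerivAt_w (l r : ℝ) : HasDerivAt (w · l) (v r l) r := by
  unfold w v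
  exact ((hasDerivAt_neg r).mul
    ((((hasDerivAt_pow 2 r).const_mul (-2)).mul_const (l ^ 2)).exp)).congr_deriv
    (by push_cast; ring)

theorem hasDerivAt_v (l r : ℝ) :
    HasDerivAt (v · l) (4 * r * l ^ 2 * (3 - 4 * r ^ 2 * l ^ 2) * exp (-2 * r ^ 2 * l ^ 2)) r := by
  unfold v
  exact (((((hasDerivAt_pow 2 r).const_mul 4).mul_const (l ^ 2)).sub_const 1).mul
    ((((hasDerivAt_pow 2 r).const_mul (-2)).mul_const (l ^ 2)).exp)).congr_deriv
    (by push_cast; ring)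

theorem continuous_v (l : ℝ) : Continuous (v · l) := by
  unfold v; fun_prop

theorem integral_v (l a b : ℝ) : ∫ x in a..b, v x l = w b l - w a l :=
  intervalIntegral.integral_eq_sub_of_hasDerivAt (fun x _ => hasDerivAt_w l x)
    ((continuous_v l).intervalIntegrable a b)

theorem monotoneOn_v {a : ℝ} (ha : 2 * a ^ 2 * l ^ 2 ≤ 3 / 2) :
    MonotoneOn (v · l) (Icc 0 a) := by
  refine monotoneOn_of_deriv_nonneg (convex_Icc 0 a) (continuous_v l).continuousOn
    (fun x _ => (hasDerivAt_v l x).differentiableAt.differentiableWithinAt) fun x hx => ?_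
  rw [interior_Icc] at hx
  have hx₀ := hx.1.le
  have : x ^ 2 ≤ a ^ 2 := pow_le_pow_left₀ hx₀ hx.2.le 2
  have : 0 ≤ 3 - 4 * x ^ 2 * l ^ 2 := by nlinarith [sq_nonneg l]
  rw [(hasDerivAt_v l x).deriv]
  positivity

theorem antitoneOn_v {a : ℝ} (ha₀ : 0 ≤ a) (ha : 3 / 2 ≤ 2 * a ^ 2 * l ^ 2) :
    AntitoneOn (v · l) (Ici a) := by
  refine antitoneOn_of_deriv_nonpos (convex_Ici a) (continuous_v l).continuousOn
    (fun x _ => (hasDerivAt_v l x).differentiableAt.differentiableWithinAt) fun x hx => ?_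
  rw [interior_Ici] at hx
  have hx₀ : 0 ≤ x := ha₀.trans hx.le
  have : a ^ 2 ≤ x ^ 2 := pow_le_pow_left₀ ha₀ hx.le 2
  have : 0 ≤ 4 * x ^ 2 * l ^ 2 - 3 := by nlinarith [sq_nonneg l]
  have : 0 ≤ 4 * x * l ^ 2 * (4 * x ^ 2 * l ^ 2 - 3) * exp (-2 * x ^ 2 * l ^ 2) := by positivity
  rw [(hasDerivAt_v l x).deriv]
  linarith

theorem w_nonpos {r : ℝ} (hr : 0 ≤ r) : w r l ≤ 0 := by
  have := exp_pos (-2 * r ^ 2 * l ^ 2)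
  unfold w; nlinarith

theorem tendsto_w_atTop (hl : l ≠ 0) : Tendsto (w · l) atTop (𝓝 0) := by
  have h := (tendsto_rpow_abs_mul_exp_neg_mul_sq_cocompact (a := 2 * l ^ 2) (by positivity)
    1).mono_left atTop_le_cocompact
  refine (h.neg.congr' ?_).trans (by rw [neg_zero])
  filter_upwards [eventually_ge_atTop 0] with x hx
  rw [rpow_one, abs_of_nonneg hx, w]; ring_nf

section
variable {x₀ : ℝ} (hx₀ : 0 ≤ x₀) (hv : 3 / 2 ≤ 2 * x₀ ^ 2 * l ^ 2)
include hx₀ hv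

theorem v_nonneg_of_le {r : ℝ} (hr : x₀ ≤ r) : 0 ≤ v r l := by
  have : x₀ ^ 2 ≤ r ^ 2 := pow_le_pow_left₀ hx₀ hr 2
  exact mul_nonneg (by nlinarith [sq_nonneg l]) (exp_pos _).le

theorem summable_v_add : Summable fun i : ℕ => v (x₀ + i) l := by
  have anti := antitoneOn_v hx₀ hv
  refine (summable_nat_add_iff 1).mp
    (summable_of_sum_range_le (c := -w x₀ l) (fun i => ?_) fun N => ?_)
  · exact v_nonneg_of_le hx₀ hv (le_add_of_nonneg_right (Nat.cast_nonneg _))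
  · calc ∑ i ∈ range N, v (x₀ + ↑(i + 1)) l
        ≤ ∫ x in x₀..x₀ + N, v x l := (anti.mono Icc_subset_Ici_self).sum_le_integral
      _ = w (x₀ + N) l - w x₀ l := integral_v l _ _
      _ ≤ -w x₀ l := by linarith [w_nonpos (l := l) (by positivity : 0 ≤ x₀ + N)]

theorem neg_w_le_tsum_v : -w x₀ l ≤ ∑' i : ℕ, v (x₀ + i) l := by
  have hl : l ≠ 0 := by rintro rfl; norm_num at hv
  have hlim : Tendsto (fun N : ℕ => w (x₀ + N) l - w x₀ l) atTop (𝓝 (0 - w x₀ l)) :=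
    ((tendsto_w_atTop hl).comp
      (tendsto_atTop_add_const_left _ x₀ tendsto_natCast_atTop_atTop)).sub_const _
  refine le_of_tendsto' (zero_sub (w x₀ l) ▸ hlim) fun N => ?_
  calc w (x₀ + N) l - w x₀ l = ∫ x in x₀..x₀ + N, v x l := (integral_v l _ _).symm
    _ ≤ ∑ i ∈ range N, v (x₀ + i) l :=
      ((antitoneOn_v hx₀ hv).mono Icc_subset_Ici_self).integral_le_sum
    _ ≤ ∑' i : ℕ, v (x₀ + i) l := (summable_v_add hx₀ hv).sum_le_tsum _
      fun i _ => v_nonneg_of_le hx₀ hv (le_add_of_nonneg_right (Nat.cast_nonneg _))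

end

theorem w_le_sum_v {m : ℕ} (hm : 2 * (m : ℝ) ^ 2 * l ^ 2 ≤ 3 / 2) :
    w m l ≤ ∑ i ∈ range m, v (i + 1) l := by
  have := (zero_add (m : ℝ) ▸ monotoneOn_v hm).integral_le_sum
  simpa [integral_v, w, add_comm] using this

theorem w_sub_one_add_v_le_sum_v {n : ℕ} (hn : 1 ≤ n) (h : 2 * (n : ℝ) ^ 2 * l ^ 2 ≤ 3 / 2) :
    w ((n : ℝ) - 1) l + v n l ≤ ∑ i ∈ range n, v (i + 1) l := by
  obtain ⟨m, rfl⟩ := Nat.exists_eq_add_of_le' hn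
  push_cast at h ⊢
  rw [sum_range_succ, add_sub_cancel_right]
  have : (m : ℝ) ^ 2 ≤ (m + 1) ^ 2 := by gcongr; linarith
  gcongr
  exact w_le_sum_v (by nlinarith [sq_nonneg l])

theorem lower_bound_le_tsum_v {n : ℕ} (hlo : 2 * (n : ℝ) ^ 2 * l ^ 2 ≤ 3 / 2)
    (hup : 3 / 2 ≤ 2 * ((n : ℝ) + 1) ^ 2 * l ^ 2) :
    (if 1 ≤ n then w ((n : ℝ) - 1) l + v n l else 0) + v ((n : ℝ) + 1) l
        - w ((n : ℝ) + 1 + 1) l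
      ≤ ∑' j : ℕ, v ((j : ℝ) + 1) l := by
  have hx₀ : (0 : ℝ) ≤ n + 1 + 1 := by positivity
  have hv : 3 / 2 ≤ 2 * ((n : ℝ) + 1 + 1) ^ 2 * l ^ 2 := by
    have : ((n : ℝ) + 1) ^ 2 ≤ (n + 1 + 1) ^ 2 := by gcongr; linarith
    nlinarith [sq_nonneg l]
  have hshift (i : ℕ) : ((i + (n + 1) : ℕ) : ℝ) + 1 = (n + 1 + 1 : ℝ) + i := by
    push_cast; ring
  have hhead :
      (if 1 ≤ n then w ((n : ℝ) - 1) l + v n l else 0) ≤ ∑ i ∈ range n, v (i + 1) l := by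
    split_ifs with hn
    · exact w_sub_one_add_v_le_sum_v hn hlo
    · simp [show n = 0 by omega]
  rw [← Summable.sum_add_tsum_nat_add' (k := n + 1)
    (by simpa only [hshift] using summable_v_add hx₀ hv), sum_range_succ]
  simp only [hshift]
  linarith [neg_w_le_tsum_v hx₀ hv]

end

theorem natCeil_eq_natFloor_add_one {x : ℝ} (hx : 0 ≤ x) (h : ∀ n : ℕ, (n : ℝ) ≠ x) :
    ⌈x⌉₊ = ⌊x⌋₊ + 1 := by
  refine le_antisymm (Nat.ceil_le_floor_add_one x) (Nat.succ_le_of_lt ?_)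
  exact_mod_cast ((Nat.floor_le hx).lt_of_ne (h _)).trans_le (Nat.le_ceil x)

/-- Lower bound of Proposition 2: with `r_lo = ⌊1/(√2λ)⌋`, `r_up = ⌈1/(√2λ)⌉`,
`1/(√2λ)` not an integer and `2·r_up·λ ≥ √3`,
`∑_{j≥1} v(j,λ) ≥ [r_lo ≥ 1] (w(r_lo - 1,λ) + v(r_lo,λ)) + v(r_up,λ)
  + (r_up+1)·exp(-2(r_up+1)²λ²)`,
and hence the Kuiper p-value `KD = 2∑_{j≥1} v(j,λ)` is at least twice the right-hand side. -/
theorem stmt_16 (l : ℝ) (hl : 0 < l) (r_lo r_up : ℕ)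
    (hlo : r_lo = ⌊1 / (Real.sqrt 2 * l)⌋₊)
    (hup : r_up = ⌈1 / (Real.sqrt 2 * l)⌉₊)
    (hnotint : ∀ n : ℕ, (n : ℝ) ≠ 1 / (Real.sqrt 2 * l))
    (h : Real.sqrt 3 ≤ 2 * r_up * l) :
    (if 1 ≤ r_lo then w ((r_lo : ℝ) - 1) l + v r_lo l else 0) + v r_up l
        + ((r_up : ℝ) + 1) * Real.exp (-2 * ((r_up : ℝ) + 1) ^ 2 * l ^ 2)
      ≤ (∑' j : ℕ, v ((j : ℝ) + 1) l) ∧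
    2 * ((if 1 ≤ r_lo then w ((r_lo : ℝ) - 1) l + v r_lo l else 0) + v r_up l
        + ((r_up : ℝ) + 1) * Real.exp (-2 * ((r_up : ℝ) + 1) ^ 2 * l ^ 2))
      ≤ 2 * (∑' j : ℕ, v ((j : ℝ) + 1) l) := by
  have hx : 0 < 1 / (√2 * l) := by positivity
  obtain rfl : r_up = r_lo + 1 := hup ▸ hlo ▸ natCeil_eq_natFloor_add_one hx.le hnotint
  push_cast at h ⊢
  have hlo' : 2 * (r_lo : ℝ) ^ 2 * l ^ 2 ≤ 3 / 2 := by
    have h1 : (r_lo : ℝ) * (√2 * l) ≤ 1 :=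
      (le_div_iff₀ (by positivity)).mp (hlo ▸ Nat.floor_le hx.le)
    have := pow_le_one₀ (n := 2) (by positivity) h1
    rw [mul_pow, mul_pow, sq_sqrt (by norm_num)] at this
    linarith
  have hup' : 3 / 2 ≤ 2 * ((r_lo : ℝ) + 1) ^ 2 * l ^ 2 := by
    have := pow_le_pow_left₀ (sqrt_nonneg 3) h 2
    rw [sq_sqrt (by norm_num)] at this
    linarith
  have htail : ((r_lo : ℝ) + 1 + 1) * exp (-2 * ((r_lo : ℝ) + 1 + 1) ^ 2 * l ^ 2)
      = -w ((r_lo : ℝ) + 1 + 1) l := by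
    rw [w]; ring
  have key := lower_bound_le_tsum_v hlo' hup'
  constructor <;> linarith
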